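/- arXiv:2108.07791 — 5 statements merged into one kernel-verified Lean document; each statement's English description precedes it below -/
import Mathlib

section
/- For every ε > 0 there exists a constant C > 0 such that for all integers n ≥ 2, all real t ≥ C·n², and all x ∈ Λ_n, one has |(exp(tΔ_n)𝟙)(x) − φ̂_𝟏(x)·e^{−λ_𝟏 t}| ≤ ε·e^{−λ_𝟏 t}, where exp(tΔ_n) is the matrix exponential of tΔ_n and 𝟙 ∈ ℝ^{Λ_n} is the all-ones vector; thus the survival probability of the rate-1 continuous-time simple random walk on Λ_n killed at ∂Λ_n, started at x and run for time t, equals φ̂_𝟏(x)e^{−λ_𝟏 t} up to an error that is o(e^{−λ_𝟏 t}) when n² = o(t). -/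
/-!
The products `φ_𝐢` of one-dimensional sine vectors are eigenvectors of `Δ_n` with eigenvalues
`-λ_𝐢`, and they form an orthonormal basis: the completeness relation `∑_𝐢 φ_𝐢(x) φ_𝐢(y) = δ_{xy}`
reduces to the Dirichlet-kernel sum of cosines. Expanding `𝟙` in this basis gives
`exp(tΔ_n)𝟙 = ∑_𝐢 ⟨𝟙, φ_𝐢⟩ e^{-λ_𝐢 t} φ_𝐢`, whose `𝐢 = 𝟏` term is `φ̂_𝟏 e^{-λ_𝟏 t}`.
Every coefficient satisfies `|⟨𝟙, φ_𝐢⟩ φ_𝐢(x)| ≤ 4`, and Jordan's inequality gives the spectral gap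
`λ_𝐢 - λ_𝟏 ≥ (i₁ + i₂ - 2) / n²`. Hence for `t ≥ C n²` the other terms are at most
`4 r^{i₁ + i₂ - 2} e^{-λ_𝟏 t}` with `r = e^{-C}`, and the geometric series sums to
`O(r) e^{-λ_𝟏 t}`.
-/

open scoped BigOperators

namespace DGFFStmt

/-- The interior box `Λ_n = {1,…,n−1}²`, encoded with `Fin (n-1) × Fin (n-1)`;
the lattice coordinate of `x` is `((x.1 : ℤ) + 1, (x.2 : ℤ) + 1)`. -/
abbrev Lam (n : ℕ) := Fin (n - 1) × Fin (n - 1)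

/-- Lattice coordinates of a point of `Λ_n`. -/
def coord (n : ℕ) (x : Lam n) : ℤ × ℤ := (((x.1 : ℕ) : ℤ) + 1, ((x.2 : ℕ) : ℤ) + 1)

/-- Adjacency in `ℤ²`: Euclidean distance 1. -/
def adj (p q : ℤ × ℤ) : Prop := (p.1 - q.1) ^ 2 + (p.2 - q.2) ^ 2 = 1

instance (p q : ℤ × ℤ) : Decidable (adj p q) := by unfold adj; infer_instance

/-- The discrete Laplacian `Δ_n` on `Λ_n`. -/
noncomputable def Delta (n : ℕ) : Matrix (Lam n) (Lam n) ℝ :=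
  Matrix.of fun x y =>
    if x = y then -1 else if adj (coord n x) (coord n y) then (1 : ℝ) / 4 else 0

/-- `λ_𝟏 = 1 − cos(π/n)`. -/
noncomputable def lamOne (n : ℕ) : ℝ := 1 - Real.cos (Real.pi / n)

/-- `φ_1(k) = √(2/n)·sin(kπ/n)` (the `i = 1` one–dimensional eigenvector). -/
noncomputable def phi1 (n k : ℕ) : ℝ := Real.sqrt (2 / n) * Real.sin (k * Real.pi / n)

/-- `φ_𝟏(x) = φ_1(x₁)·φ_1(x₂)`. -/
noncomputable def phiOne (n : ℕ) (x : Lam n) : ℝ :=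
  phi1 n ((x.1 : ℕ) + 1) * phi1 n ((x.2 : ℕ) + 1)

/-- `φ̂_𝟏(x) = φ_𝟏(x)·∑_y φ_𝟏(y)`. -/
noncomputable def phiHatOne (n : ℕ) (x : Lam n) : ℝ :=
  phiOne n x * ∑ y : Lam n, phiOne n y

open Real Finset Matrix

lemma two_mul_sin_mul_sum_range_cos (θ : ℝ) (m : ℕ) :
    2 * sin (θ / 2) * ∑ j ∈ range m, cos ((j + 1) * θ) = sin ((m + 1 / 2) * θ) - sin (θ / 2) := by
  induction m with
  | zero => simp [div_eq_inv_mul]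
  | succ m ih =>
    rw [sum_range_succ, mul_add, ih]
    have h : (↑(m + 1) + 1 / 2) * θ = (m + 1) * θ + θ / 2 := by push_cast; ring
    have h' : ((m : ℝ) + 1 / 2) * θ = (m + 1) * θ - θ / 2 := by ring
    rw [h, h', sin_add, sin_sub]
    ring

lemma sum_cos_int_mul_pi_div {n : ℕ} (hn : 0 < n) {k : ℤ} (hk₀ : k ≠ 0) (hk : |k| < 2 * n) :
    ∑ j : Fin (n - 1), cos ((j + 1) * (k * π / n)) = -(1 + cos (k * π)) / 2 := by
  rw [Fin.sum_univ_eq_sum_range (fun j => cos ((j + 1) * (k * π / n)))]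
  have hn' : (n : ℝ) ≠ 0 := by positivity
  have hsin : sin (k * π / n / 2) ≠ 0 := by
    rw [Ne, sin_eq_zero_iff]
    rintro ⟨m, hm⟩
    refine hk₀ (Int.eq_zero_of_abs_lt_dvd ⟨m, ?_⟩ hk)
    field_simp at hm
    exact_mod_cast (by linarith [hm] : (k : ℝ) = 2 * n * m)
  have hlast : (((n - 1 : ℕ) : ℝ) + 1 / 2) * (k * π / n) = k * π - k * π / n / 2 := by
    rw [Nat.cast_sub hn]; field_simp; ring
  have h := two_mul_sin_mul_sum_range_cos (k * π / n) (n - 1)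
  rw [hlast, sin_sub, sin_int_mul_pi] at h
  apply mul_left_cancel₀ (mul_ne_zero two_ne_zero hsin)
  rw [h]
  ring

/-- The paper's `φ_i(k)`, extended to `k ∈ ℤ` so that the boundary values `k = 0, n` make sense. -/
noncomputable def sineMode (n i : ℕ) (k : ℤ) : ℝ := √(2 / n) * sin (i * k * π / n)

section SineMode

variable {n : ℕ}

lemma sineMode_zero (i : ℕ) : sineMode n i 0 = 0 := by simp [sineMode]

lemma sineMode_self (hn : n ≠ 0) (i : ℕ) : sineMode n i n = 0 := by
  have : (i * (n : ℤ) * π / n : ℝ) = i * π := by push_cast; field_simp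
  rw [sineMode, this, sin_nat_mul_pi, mul_zero]

lemma sineMode_add_one_add_sineMode_sub_one (i : ℕ) (k : ℤ) :
    sineMode n i (k + 1) + sineMode n i (k - 1) = 2 * cos (i * π / n) * sineMode n i k := by
  have h₁ : (i * (k + 1 : ℤ) * π / n : ℝ) = i * k * π / n + i * π / n := by push_cast; ring
  have h₂ : (i * (k - 1 : ℤ) * π / n : ℝ) = i * k * π / n - i * π / n := by push_cast; ring
  rw [sineMode, sineMode, sineMode, h₁, h₂, sin_add, sin_sub]
  ring

lemma abs_sineMode_le (i : ℕ) (k : ℤ) : |sineMode n i k| ≤ √(2 / n) := by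
  rw [sineMode, abs_mul, abs_of_nonneg (sqrt_nonneg _)]
  exact mul_le_of_le_one_right (sqrt_nonneg _) (abs_sin_le_one _)

lemma sineMode_mul_sineMode (i : ℕ) (a b : ℤ) :
    sineMode n i a * sineMode n i b
      = (cos (i * (a - b) * π / n) - cos (i * (a + b) * π / n)) / n := by
  have h₁ : (i * (a - b) * π / n : ℝ) = i * a * π / n - i * b * π / n := by ring
  have h₂ : (i * (a + b) * π / n : ℝ) = i * a * π / n + i * b * π / n := by ring
  have h₃ : √(2 / n) * √(2 / n) = 2 / (n : ℝ) := mul_self_sqrt (by positivity)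
  rw [sineMode, sineMode, h₁, h₂, cos_sub, cos_add]
  linear_combination sin (i * a * π / n) * sin (i * b * π / n) * h₃

lemma sum_sineMode_mul_sineMode {a b : ℤ} (ha : 1 ≤ a) (ha' : a < n) (hb : 1 ≤ b) (hb' : b < n) :
    ∑ j : Fin (n - 1), sineMode n (j + 1) a * sineMode n (j + 1) b = if a = b then 1 else 0 := by
  have hn : 0 < n := by omega
  have hn' : (n : ℝ) ≠ 0 := by positivity
  have hcos (j : ℕ) (k : ℤ) :
      cos (((j + 1 : ℕ) : ℝ) * k * π / n) = cos ((j + 1) * (k * π / n)) := by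
    push_cast; ring_nf
  simp only [sineMode_mul_sineMode, ← sum_div, sum_sub_distrib, ← Int.cast_sub, ← Int.cast_add,
    hcos]
  rw [sum_cos_int_mul_pi_div hn (k := a + b) (by omega) (by rw [abs_lt]; omega)]
  split_ifs with hab
  · subst hab
    have : cos ((a + a : ℤ) * π) = 1 := by
      rw [show ((a + a : ℤ) : ℝ) * π = a * (2 * π) by push_cast; ring, cos_int_mul_two_pi]
    simp only [sub_self, Int.cast_zero, zero_mul, zero_div, mul_zero, cos_zero, sum_const,
      card_univ, Fintype.card_fin, nsmul_eq_mul, Nat.cast_sub hn, this]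
    field_simp
    ring
  · rw [sum_cos_int_mul_pi_div hn (k := a - b) (by omega) (by rw [abs_lt]; omega)]
    have : cos ((a + b : ℤ) * π) = cos ((a - b : ℤ) * π) := by
      rw [show ((a + b : ℤ) : ℝ) * π = (a - b : ℤ) * π + b * (2 * π) by push_cast; ring,
        cos_add_int_mul_two_pi]
    rw [this]; ring

end SineMode

lemma two_mul_sq_sub_one_div_sq_le_cos_sub_cos {x a : ℝ} (hx : 0 < x) (ha : 1 ≤ a)
    (hax : a + 1 ≤ x) : 2 * (a ^ 2 - 1) / x ^ 2 ≤ cos (π / x) - cos (a * π / x) := by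
  have hcos : cos (π / x) - cos (a * π / x)
      = 2 * sin ((a + 1) * π / (2 * x)) * sin ((a - 1) * π / (2 * x)) := by
    rw [cos_sub_cos, show (π / x - a * π / x) / 2 = -((a - 1) * π / (2 * x)) by ring, sin_neg,
      show (π / x + a * π / x) / 2 = (a + 1) * π / (2 * x) by ring]
    ring
  -- Jordan's inequality `2 y / π ≤ sin y` on `[0, π/2]`, applied to both factors
  have jordan {b : ℝ} (hb : 0 ≤ b) (hbx : b ≤ x) : b / x ≤ sin (b * π / (2 * x)) := by
    have hle : b * π / (2 * x) ≤ π / 2 := by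
      rw [div_le_div_iff₀ (by positivity) two_pos]; nlinarith [pi_pos]
    have h := mul_le_sin (by positivity) hle
    rwa [show 2 / π * (b * π / (2 * x)) = b / x by field_simp] at h
  have hsin₁ := jordan (by linarith) hax
  have hsin₂ := jordan (b := a - 1) (by linarith) (by linarith)
  rw [hcos]
  calc 2 * (a ^ 2 - 1) / x ^ 2 = 2 * ((a + 1) / x) * ((a - 1) / x) := by ring
    _ ≤ 2 * sin ((a + 1) * π / (2 * x)) * sin ((a - 1) * π / (2 * x)) := by
      have h₀ : 0 ≤ (a - 1) / x := div_nonneg (by linarith) hx.le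
      have h₁ : 0 ≤ (a + 1) / x := div_nonneg (by linarith) hx.le
      gcongr
      linarith

section Spectral

variable {N ι : Type*} [Fintype N] [DecidableEq N] [Fintype ι]

lemma exp_mulVec_of_mulVec_eq_smul {B : Matrix N N ℝ} {v : N → ℝ} {c : ℝ}
    (h : B *ᵥ v = c • v) : NormedSpace.exp B *ᵥ v = exp c • v := by
  -- `exp` depends only on the topology, so any matrix norm serves to sum its series
  let _ : NormedRing (Matrix N N ℝ) := Matrix.linftyOpNormedRing
  let _ : NormedAlgebra ℝ (Matrix N N ℝ) := Matrix.linftyOpNormedAlgebra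
  have hpow (k : ℕ) : B ^ k *ᵥ v = c ^ k • v := by
    induction k with
    | zero => simp
    | succ k ih => rw [pow_succ', ← mulVec_mulVec, ih, mulVec_smul, h, smul_smul, pow_succ]
  have hB := (NormedSpace.exp_series_hasSum_exp' (𝕂 := ℝ) B).map
    (Matrix.mulVec.addMonoidHomLeft v) (Continuous.matrix_mulVec continuous_id continuous_const)
  have hc := (NormedSpace.exp_series_hasSum_exp' (𝕂 := ℝ) c).smul_const v
  rw [← exp_eq_exp_ℝ] at hc
  refine hB.unique (hc.congr_fun fun k => ?_)
  simp [Matrix.mulVec.addMonoidHomLeft, smul_mulVec, hpow, smul_smul]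

lemma eq_sum_dotProduct_smul {v : ι → N → ℝ}
    (hv : ∀ x y, ∑ i, v i x * v i y = if x = y then 1 else 0) (w : N → ℝ) :
    w = ∑ i, (w ⬝ᵥ v i) • v i := by
  ext z
  simp only [Finset.sum_apply, Pi.smul_apply, smul_eq_mul, dotProduct, Finset.sum_mul, mul_assoc]
  rw [Finset.sum_comm]
  simp [← Finset.mul_sum, hv]

lemma exp_mulVec_eq_sum {B : Matrix N N ℝ} {v : ι → N → ℝ} {μ : ι → ℝ}
    (hv : ∀ x y, ∑ i, v i x * v i y = if x = y then 1 else 0) (hB : ∀ i, B *ᵥ v i = μ i • v i)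
    (w : N → ℝ) : NormedSpace.exp B *ᵥ w = ∑ i, ((w ⬝ᵥ v i) * exp (μ i)) • v i := by
  conv_lhs => rw [eq_sum_dotProduct_smul hv w]
  simp [mulVec_sum, mulVec_smul, exp_mulVec_of_mulVec_eq_smul (hB _), smul_smul]

end Spectral

def latticeNeighbors (p : ℤ × ℤ) : Finset (ℤ × ℤ) :=
  {(p.1 + 1, p.2), (p.1 - 1, p.2), (p.1, p.2 + 1), (p.1, p.2 - 1)}

lemma adj_iff_mem_latticeNeighbors {p q : ℤ × ℤ} : adj p q ↔ q ∈ latticeNeighbors p := by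
  obtain ⟨a, b⟩ := p
  obtain ⟨c, d⟩ := q
  simp only [adj, latticeNeighbors, mem_insert, mem_singleton, Prod.mk.injEq]
  constructor
  · intro h
    obtain ⟨u, rfl⟩ : ∃ u, c = a - u := ⟨a - c, by ring⟩
    obtain ⟨w, rfl⟩ : ∃ w, d = b - w := ⟨b - d, by ring⟩
    have huw : u ^ 2 + w ^ 2 = 1 := by linear_combination h
    have hu₀ : -1 ≤ u := by nlinarith
    have hu₁ : u ≤ 1 := by nlinarith
    have hw₀ : -1 ≤ w := by nlinarith
    have hw₁ : w ≤ 1 := by nlinarith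
    interval_cases u <;> interval_cases w <;> omega
  · rintro (⟨rfl, rfl⟩ | ⟨rfl, rfl⟩ | ⟨rfl, rfl⟩ | ⟨rfl, rfl⟩) <;> ring

lemma sum_latticeNeighbors (p : ℤ × ℤ) (F : ℤ × ℤ → ℝ) :
    ∑ q ∈ latticeNeighbors p, F q
      = F (p.1 + 1, p.2) + F (p.1 - 1, p.2) + F (p.1, p.2 + 1) + F (p.1, p.2 - 1) := by
  rw [latticeNeighbors, sum_insert, sum_insert, sum_insert, sum_singleton]
  · ring
  all_goals simp only [mem_insert, mem_singleton, Prod.mk.injEq]; omega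

lemma coord_injective (n : ℕ) : Function.Injective (coord n) := by
  rintro ⟨⟨a, ha⟩, ⟨b, hb⟩⟩ ⟨⟨c, hc⟩, ⟨d, hd⟩⟩ h
  simp only [coord, Prod.mk.injEq, add_left_inj, Nat.cast_inj] at h
  simp [h]

lemma mem_image_coord_iff {n : ℕ} {q : ℤ × ℤ} :
    q ∈ univ.image (coord n) ↔ 1 ≤ q.1 ∧ q.1 < n ∧ 1 ≤ q.2 ∧ q.2 < n := by
  constructor
  · simp only [mem_image, mem_univ, true_and]
    rintro ⟨⟨⟨a, ha⟩, ⟨b, hb⟩⟩, rfl⟩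
    simp only [coord]
    omega
  · rintro ⟨h₁, h₂, h₃, h₄⟩
    refine mem_image.2 ⟨(⟨(q.1 - 1).toNat, by omega⟩, ⟨(q.2 - 1).toNat, by omega⟩), mem_univ _, ?_⟩
    simp only [coord, Prod.ext_iff]
    omega

lemma sum_adj_coord_eq_sum_latticeNeighbors {n : ℕ} (x : Lam n) {F : ℤ × ℤ → ℝ}
    (hF : ∀ q : ℤ × ℤ, q.1 = 0 ∨ q.1 = n ∨ q.2 = 0 ∨ q.2 = n → F q = 0) :
    ∑ y, (if adj (coord n x) (coord n y) then F (coord n y) else 0)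
      = ∑ q ∈ latticeNeighbors (coord n x), F q := by
  have hx := mem_image_coord_iff.1 (mem_image_of_mem (coord n) (mem_univ x))
  rw [← sum_image (f := fun q => if adj (coord n x) q then F q else 0)
    fun _ _ _ _ h => coord_injective n h, ← sum_filter]
  refine sum_subset (fun q hq => adj_iff_mem_latticeNeighbors.1 (mem_filter.1 hq).2)
    fun q hq hq' => hF q ?_
  -- a neighbor of an interior point that is not itself interior lies on the boundary
  have hq'' : q ∉ univ.image (coord n) := fun h =>
    hq' (mem_filter.2 ⟨h, adj_iff_mem_latticeNeighbors.2 hq⟩)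
  rw [mem_image_coord_iff] at hq''
  simp only [latticeNeighbors, mem_insert, mem_singleton] at hq
  rcases hq with rfl | rfl | rfl | rfl <;> simp only at hq'' ⊢ <;> omega

lemma Delta_mulVec_comp_coord {n : ℕ} {F : ℤ × ℤ → ℝ}
    (hF : ∀ q : ℤ × ℤ, q.1 = 0 ∨ q.1 = n ∨ q.2 = 0 ∨ q.2 = n → F q = 0) (x : Lam n) :
    (Delta n *ᵥ (F ∘ coord n)) x
      = -F (coord n x) + (∑ q ∈ latticeNeighbors (coord n x), F q) / 4 := by
  have hentry (y : Lam n) : Delta n x y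
      = (if x = y then -1 else 0) + if adj (coord n x) (coord n y) then 1 / 4 else 0 := by
    by_cases h : x = y
    · simp [Delta, h, adj]
    · simp [Delta, h]
  simp only [mulVec, dotProduct, hentry, add_mul, sum_add_distrib, ite_mul, zero_mul,
    sum_ite_eq, mem_univ, if_true, Function.comp_apply]
  rw [← sum_adj_coord_eq_sum_latticeNeighbors x hF, sum_div]
  congr 1
  · ring
  · refine sum_congr rfl fun y _ => ?_
    split_ifs <;> ring

/-- The paper's `φ_𝐢` with the index shift `𝐢 = (i.1 + 1, i.2 + 1)`; `modeEigenvalue` is `λ_𝐢`. -/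
noncomputable def mode (n : ℕ) (i x : Lam n) : ℝ :=
  sineMode n (i.1 + 1) (coord n x).1 * sineMode n (i.2 + 1) (coord n x).2

noncomputable def modeEigenvalue (n : ℕ) (i : Lam n) : ℝ :=
  1 - (cos (((i.1 + 1 : ℕ) : ℝ) * π / n) + cos (((i.2 + 1 : ℕ) : ℝ) * π / n)) / 2

section Modes

variable {n : ℕ}

lemma Delta_mulVec_mode (hn : n ≠ 0) (i : Lam n) :
    Delta n *ᵥ mode n i = -modeEigenvalue n i • mode n i := by
  set F : ℤ × ℤ → ℝ := fun q => sineMode n (i.1 + 1) q.1 * sineMode n (i.2 + 1) q.2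
  have hF (q : ℤ × ℤ) (hq : q.1 = 0 ∨ q.1 = n ∨ q.2 = 0 ∨ q.2 = n) : F q = 0 := by
    rcases hq with h | h | h | h <;> simp [F, h, sineMode_zero, sineMode_self hn]
  ext x
  have h₁ := sineMode_add_one_add_sineMode_sub_one (n := n) (i.1 + 1) (coord n x).1
  have h₂ := sineMode_add_one_add_sineMode_sub_one (n := n) (i.2 + 1) (coord n x).2
  rw [show mode n i = F ∘ coord n from rfl, Delta_mulVec_comp_coord hF, sum_latticeNeighbors]
  simp only [F, modeEigenvalue, Function.comp_apply, Pi.smul_apply, smul_eq_mul]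
  linear_combination sineMode n (i.2 + 1) (coord n x).2 / 4 * h₁
    + sineMode n (i.1 + 1) (coord n x).1 / 4 * h₂

lemma sum_mode_mul_mode (x y : Lam n) :
    ∑ i, mode n i x * mode n i y = if x = y then 1 else 0 := by
  obtain ⟨hx₁, hx₁', hx₂, hx₂'⟩ := mem_image_coord_iff.1 (mem_image_of_mem (coord n) (mem_univ x))
  obtain ⟨hy₁, hy₁', hy₂, hy₂'⟩ := mem_image_coord_iff.1 (mem_image_of_mem (coord n) (mem_univ y))
  calc ∑ i, mode n i x * mode n i y
      = (∑ j : Fin (n - 1), sineMode n (j + 1) (coord n x).1 * sineMode n (j + 1) (coord n y).1) *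
          ∑ j : Fin (n - 1), sineMode n (j + 1) (coord n x).2 * sineMode n (j + 1) (coord n y).2 := by
        rw [sum_mul_sum, Fintype.sum_prod_type]
        refine sum_congr rfl fun _ _ => sum_congr rfl fun _ _ => ?_
        simp only [mode]
        ring
    _ = if x = y then 1 else 0 := by
        rw [sum_sineMode_mul_sineMode hx₁ hx₁' hy₁ hy₁',
          sum_sineMode_mul_sineMode hx₂ hx₂' hy₂ hy₂', ite_zero_mul_ite_zero, one_mul]
        simp only [← Prod.ext_iff, (coord_injective n).eq_iff]

lemma abs_mode_le (i x : Lam n) : |mode n i x| ≤ 2 / n := by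
  rw [mode, abs_mul, ← mul_self_sqrt (by positivity : (0 : ℝ) ≤ 2 / n)]
  exact mul_le_mul (abs_sineMode_le _ _) (abs_sineMode_le _ _) (abs_nonneg _) (sqrt_nonneg _)

lemma mode_zero (hn : 2 ≤ n) : mode n (⟨0, by omega⟩, ⟨0, by omega⟩) = phiOne n := by
  ext x
  simp only [mode, phiOne, phi1, sineMode, coord]
  push_cast
  ring_nf

lemma modeEigenvalue_zero (hn : 2 ≤ n) :
    modeEigenvalue n (⟨0, by omega⟩, ⟨0, by omega⟩) = lamOne n := by
  simp [modeEigenvalue, lamOne]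

lemma lamOne_add_le_modeEigenvalue (hn : n ≠ 0) (i : Lam n) :
    lamOne n + ((i.1 : ℕ) + (i.2 : ℕ) : ℝ) / n ^ 2 ≤ modeEigenvalue n i := by
  have hn' : (0 : ℝ) < n := by positivity
  have hgap (j : Fin (n - 1)) :
      2 * ((j : ℕ) : ℝ) / n ^ 2 ≤ cos (π / n) - cos (((j + 1 : ℕ) : ℝ) * π / n) := by
    refine le_trans ?_ (two_mul_sq_sub_one_div_sq_le_cos_sub_cos hn' (a := ((j + 1 : ℕ) : ℝ))
      (by simp) (by have := j.isLt; norm_cast; omega))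
    gcongr
    push_cast
    nlinarith [(j : ℕ).cast_nonneg (α := ℝ)]
  have := hgap i.1
  have := hgap i.2
  rw [modeEigenvalue, lamOne]
  linarith [add_div ((i.1 : ℕ) : ℝ) (i.2 : ℕ) (n ^ 2), mul_div_assoc 2 ((i.1 : ℕ) : ℝ) (n ^ 2),
    mul_div_assoc 2 ((i.2 : ℕ) : ℝ) (n ^ 2)]

end Modes

lemma sum_pow_mul_pow_le {r : ℝ} (hr₀ : 0 ≤ r) (hr : r ≤ 1 / 2) (m : ℕ) :
    ∑ i : Fin m × Fin m, r ^ (i.1 : ℕ) * r ^ (i.2 : ℕ) ≤ 1 + 6 * r := by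
  have hS : ∑ j : Fin m, r ^ (j : ℕ) ≤ 1 + 2 * r := by
    rw [Fin.sum_univ_eq_sum_range (r ^ ·), ← Nat.Ico_zero_eq_range]
    refine (geom_sum_Ico_le_of_lt_one hr₀ (by linarith)).trans ?_
    rw [pow_zero, div_le_iff₀ (by linarith)]
    nlinarith
  simp only [Fintype.sum_prod_type]
  rw [← sum_mul_sum]
  have hS₀ : 0 ≤ ∑ j : Fin m, r ^ (j : ℕ) := by positivity
  nlinarith

section Survival

variable {n : ℕ}

lemma exp_smul_Delta_mulVec (hn : n ≠ 0) (t : ℝ) (w : Lam n → ℝ) :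
    NormedSpace.exp (t • Delta n) *ᵥ w
      = ∑ i, ((w ⬝ᵥ mode n i) * exp (-modeEigenvalue n i * t)) • mode n i :=
  exp_mulVec_eq_sum sum_mode_mul_mode (fun i => by
    rw [Matrix.smul_mulVec, Delta_mulVec_mode hn, smul_smul, mul_comm]) w

lemma abs_sum_mode_mul_mode_le (hn : n ≠ 0) (i x : Lam n) :
    |(∑ y, mode n i y) * mode n i x| ≤ 4 := by
  have hn' : (0 : ℝ) < n := by positivity
  calc |(∑ y, mode n i y) * mode n i x| ≤ ∑ _y : Lam n, (2 / n : ℝ) * (2 / n) := by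
        rw [sum_mul]
        refine (abs_sum_le_sum_abs _ _).trans (sum_le_sum fun y _ => ?_)
        rw [abs_mul]
        exact mul_le_mul (abs_mode_le i y) (abs_mode_le i x) (abs_nonneg _) (by positivity)
    _ = ((n - 1 : ℕ) : ℝ) ^ 2 * 4 / n ^ 2 := by
        simp only [sum_const, card_univ, Fintype.card_prod, Fintype.card_fin, nsmul_eq_mul]
        push_cast
        ring
    _ ≤ 4 := by
        have : (1 : ℝ) ≤ n := by exact_mod_cast Nat.one_le_iff_ne_zero.2 hn
        rw [div_le_iff₀ (by positivity), Nat.cast_sub (by omega), Nat.cast_one]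
        nlinarith

lemma exp_neg_modeEigenvalue_mul_le (hn : n ≠ 0) {C t : ℝ} (hC : 0 ≤ C) (ht : C * n ^ 2 ≤ t)
    (i : Lam n) :
    exp (-modeEigenvalue n i * t)
      ≤ exp (-C) ^ (i.1 : ℕ) * exp (-C) ^ (i.2 : ℕ) * exp (-lamOne n * t) := by
  have hn' : (0 : ℝ) < n := by positivity
  have hgap := lamOne_add_le_modeEigenvalue hn i
  have hs : 0 ≤ ((i.1 : ℕ) + (i.2 : ℕ) : ℝ) / n ^ 2 := by positivity
  have key : C * ((i.1 : ℕ) + (i.2 : ℕ) : ℝ) ≤ (modeEigenvalue n i - lamOne n) * t := calc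
    C * ((i.1 : ℕ) + (i.2 : ℕ) : ℝ) = ((i.1 : ℕ) + (i.2 : ℕ) : ℝ) / n ^ 2 * (C * n ^ 2) := by
      field_simp
    _ ≤ (modeEigenvalue n i - lamOne n) * t :=
      mul_le_mul (by linarith) ht (by positivity) (by linarith)
  rw [← exp_nat_mul, ← exp_nat_mul, ← exp_add, ← exp_add, exp_le_exp]
  linarith

lemma abs_exp_smul_Delta_mulVec_one_sub_le (hn : 2 ≤ n) {C t : ℝ} (hC : 0 ≤ C)
    (hr : exp (-C) ≤ 1 / 2) (ht : C * n ^ 2 ≤ t) (x : Lam n) :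
    |(NormedSpace.exp (t • Delta n) *ᵥ fun _ => 1) x - phiHatOne n x * exp (-lamOne n * t)|
      ≤ 24 * exp (-C) * exp (-lamOne n * t) := by
  have hn₀ : n ≠ 0 := by omega
  set r := exp (-C)
  set E := exp (-lamOne n * t)
  set term : Lam n → ℝ := fun i => (∑ y, mode n i y) * mode n i x * exp (-modeEigenvalue n i * t)
  set i₀ : Lam n := (⟨0, by omega⟩, ⟨0, by omega⟩)
  have hexpand : (NormedSpace.exp (t • Delta n) *ᵥ fun _ => 1) x = ∑ i, term i := by
    simp only [exp_smul_Delta_mulVec hn₀, Finset.sum_apply, Pi.smul_apply, smul_eq_mul, term]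
    refine sum_congr rfl fun i _ => ?_
    simp only [dotProduct, one_mul]
    ring
  have hmain : term i₀ = phiHatOne n x * E := by
    simp only [term, i₀, mode_zero hn, modeEigenvalue_zero hn, phiHatOne, E]
    ring
  have hterm (i : Lam n) : |term i| ≤ 4 * E * (r ^ (i.1 : ℕ) * r ^ (i.2 : ℕ)) := by
    calc |term i| = |(∑ y, mode n i y) * mode n i x| * exp (-modeEigenvalue n i * t) := by
          rw [abs_mul, abs_exp]
      _ ≤ 4 * (r ^ (i.1 : ℕ) * r ^ (i.2 : ℕ) * E) :=
          mul_le_mul (abs_sum_mode_mul_mode_le hn₀ i x) (exp_neg_modeEigenvalue_mul_le hn₀ hC ht i)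
            (exp_pos _).le (by norm_num)
      _ = 4 * E * (r ^ (i.1 : ℕ) * r ^ (i.2 : ℕ)) := by ring
  rw [hexpand, ← add_sum_erase _ _ (mem_univ i₀), hmain, add_sub_cancel_left]
  calc |∑ i ∈ univ.erase i₀, term i|
      ≤ ∑ i ∈ univ.erase i₀, 4 * E * (r ^ (i.1 : ℕ) * r ^ (i.2 : ℕ)) :=
        (abs_sum_le_sum_abs _ _).trans (sum_le_sum fun i _ => hterm i)
    _ = 4 * E * (∑ i : Lam n, r ^ (i.1 : ℕ) * r ^ (i.2 : ℕ) - 1) := by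
        rw [← mul_sum, ← add_sum_erase _ _ (mem_univ i₀)]
        simp [i₀]
    _ ≤ 4 * E * (6 * r) := by
        gcongr
        linarith [sum_pow_mul_pow_le (exp_pos (-C)).le hr (n - 1)]
    _ = 24 * r * E := by ring

end Survival

/-- Survival probability asymptotics for the killed rate-1 continuous-time simple random walk
on `Λ_n`: for `t ≫ n²`, `(e^{tΔ_n}𝟙)(x) = φ̂_𝟏(x)e^{−λ_𝟏 t} + o(e^{−λ_𝟏 t})`. -/
theorem survival_probability_continuous :
    ∀ ε : ℝ, 0 < ε → ∃ C : ℝ, 0 < C ∧ ∀ n : ℕ, 2 ≤ n → ∀ t : ℝ, C * (n : ℝ) ^ 2 ≤ t →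
      ∀ x : Lam n,
        |(NormedSpace.exp (t • Delta n)).mulVec (fun _ => (1 : ℝ)) x
            - phiHatOne n x * Real.exp (-(lamOne n) * t)|
          ≤ ε * Real.exp (-(lamOne n) * t) := by
  intro ε hε
  set r := min (1 / 2) (ε / 24)
  have hr₀ : 0 < r := by positivity
  have hr₁ : r < 1 := by linarith [min_le_left (1 / 2 : ℝ) (ε / 24)]
  have hexp : exp (-log r⁻¹) = r := by rw [log_inv, neg_neg, exp_log hr₀]
  have hC : 0 < log r⁻¹ := log_pos (one_lt_inv_iff₀.2 ⟨hr₀, hr₁⟩)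
  refine ⟨log r⁻¹, hC, fun n hn t ht x => ?_⟩
  calc _ ≤ 24 * exp (-log r⁻¹) * exp (-lamOne n * t) :=
        abs_exp_smul_Delta_mulVec_one_sub_le hn hC.le (by rw [hexp]; exact min_le_left _ _) ht x
    _ ≤ ε * exp (-lamOne n * t) := by
        rw [hexp]
        gcongr
        linarith [min_le_right (1 / 2 : ℝ) (ε / 24)]

end DGFFStmt
end

section
/- For every integer n ≥ 2 and every integer i with 1 ≤ i ≤ n−1, one has 1 − cos(iπ/n) ≥ i·(1 − cos(π/n)). -/
open Real

lemma sin_ge_sin_aux {y x : ℝ} (hy : 0 ≤ y) (hyx : y ≤ x) (hx : x ≤ Real.pi - y) :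
    Real.sin y ≤ Real.sin x := by
  have hy2 : y ≤ Real.pi / 2 := by linarith
  rcases le_or_gt x (Real.pi / 2) with h | h
  · exact Real.strictMonoOn_sin.monotoneOn ⟨by linarith, hy2⟩ ⟨by linarith, h⟩ hyx
  · rw [← Real.sin_pi_sub x]
    exact Real.strictMonoOn_sin.monotoneOn ⟨by linarith, hy2⟩
      ⟨by linarith, by linarith⟩ (by linarith)

/-- For integers `n ≥ 2` and `1 ≤ i ≤ n−1`, one has `1 − cos(iπ/n) ≥ i·(1 − cos(π/n))`. -/
theorem one_sub_cos_mul_ge (n i : ℕ) (hn : 2 ≤ n) (hi : 1 ≤ i) (hi' : i ≤ n - 1) :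
    (i : ℝ) * (1 - Real.cos (Real.pi / n)) ≤ 1 - Real.cos (i * Real.pi / n) := by
  have hn0 : (0:ℝ) < n := by positivity
  induction i, hi using Nat.le_induction with
  | base => simp [one_mul]
  | succ k hk ih =>
    have hk2 : k + 2 ≤ n := by omega
    have ih' := ih (by omega)
    -- key step: cos(kπ/n) - cos((k+1)π/n) ≥ 1 - cos(π/n)
    have hpi := Real.pi_pos
    set θ := Real.pi / n with hθ
    have hθ0 : 0 < θ := by positivity
    have hne : (n:ℝ) ≠ 0 := ne_of_gt hn0
    have hcos : Real.cos ((k:ℝ) * Real.pi / n) - Real.cos (((k:ℕ)+1 : ℝ) * Real.pi / n)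
        = 2 * Real.sin ((2*(k:ℝ)+1) * θ / 2) * Real.sin (θ / 2) := by
      rw [Real.cos_sub_cos]
      have e1 : ((k:ℝ) * Real.pi / n + ((k:ℕ)+1 : ℝ) * Real.pi / n) / 2
          = (2*(k:ℝ)+1) * θ / 2 := by rw [hθ]; ring
      have e2 : ((k:ℝ) * Real.pi / n - ((k:ℕ)+1 : ℝ) * Real.pi / n) / 2 = -(θ/2) := by
        rw [hθ]; ring
      rw [e1, e2, Real.sin_neg]; ring
    have hhalf : 1 - Real.cos θ = 2 * Real.sin (θ/2) ^ 2 := by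
      have h1 := Real.cos_two_mul (θ/2)
      rw [show 2*(θ/2) = θ by ring] at h1
      have h2 := Real.sin_sq_add_cos_sq (θ/2)
      nlinarith
    have hs0 : 0 ≤ Real.sin (θ/2) := by
      apply Real.sin_nonneg_of_nonneg_of_le_pi
      · positivity
      · rw [hθ]
        rw [div_div]
        apply div_le_self hpi.le
        have : (2:ℝ) ≤ n := by exact_mod_cast hn
        nlinarith
    have hsle : Real.sin (θ/2) ≤ Real.sin ((2*(k:ℝ)+1) * θ / 2) := by
      apply sin_ge_sin_aux (le_of_lt (by positivity))
      · have hk0 : (0:ℝ) ≤ (k:ℝ) := Nat.cast_nonneg k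
        nlinarith
      · have hkn : ((k:ℝ) + 2) ≤ n := by exact_mod_cast hk2
        have : (2*(k:ℝ)+1) * θ / 2 + θ/2 = ((k:ℝ)+1) * θ := by ring
        have hle : ((k:ℝ)+1) * θ ≤ Real.pi := by
          rw [hθ]
          rw [mul_div_assoc']
          rw [div_le_iff₀ hn0]
          nlinarith
        linarith
    have hkey : 1 - Real.cos θ ≤ Real.cos ((k:ℝ) * Real.pi / n)
        - Real.cos (((k:ℕ)+1 : ℝ) * Real.pi / n) := by
      rw [hcos, hhalf]
      nlinarith [mul_le_mul_of_nonneg_right hsle hs0]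
    push_cast
    push_cast at ih' hkey
    linarith
end

section
/- There exists a constant C > 0 such that for every integer n ≥ 2, every real t ≥ n², and every pair x, y ∈ Λ_n, the (x,y) entry of the matrix exponential satisfies (exp(tΔ_n))(x,y) ≤ (C/n²)·e^{−λ_𝟏 t}; i.e., the probability that the rate-1 continuous-time simple random walk on Λ_n killed at ∂Λ_n, started at x, is at y at time t is at most (C/n²)·e^{−λ_𝟏 t}. -/
/-!
Writing `D` for the Dirichlet Laplacian of the path `{0, …, n}` (jump rates `1/2`), one has
`Δ_n = ½ (D ⊗ 1 + 1 ⊗ D)`, so `exp (t Δ_n) = exp (t/2 • D) ⊗ exp (t/2 • D)`: the walk on the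
box is two independent walks on the path run at half speed. The sine vectors
`j ↦ sin (j a π / n)`, `1 ≤ a < n`, are eigenvectors of `D` with eigenvalues
`-λ_a = -(1 - cos (a π / n))` and are orthogonal with squared norm `n / 2`, so every entry of
`exp (s • D)` is at most `(2 / n) ∑ₐ exp (-s λ_a)`. Since `n² λ_a ≥ 2 a²` while `n² λ_1 ≤ π² / 2`,
for `s ≥ n² / 2` the terms decay geometrically after the first and the sum is `O (exp (-s λ_1))`.
Squaring the one-dimensional bound gives `C / n² · exp (-λ_1 t)`.
-/

open scoped BigOperators

open Finset
open scoped Kronecker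

theorem Int.sq_add_sq_eq_one_iff {a b : ℤ} :
    a ^ 2 + b ^ 2 = 1 ↔ a = 0 ∧ (b = 1 ∨ b = -1) ∨ b = 0 ∧ (a = 1 ∨ a = -1) := by
  constructor
  · intro h
    have : -1 ≤ a ∧ a ≤ 1 ∧ -1 ≤ b ∧ b ≤ 1 := by refine ⟨?_, ?_, ?_, ?_⟩ <;> nlinarith
    obtain ⟨_, _, _, _⟩ := this
    interval_cases a <;> interval_cases b <;> simp_all
  · rintro (⟨rfl, rfl | rfl⟩ | ⟨rfl, rfl | rfl⟩) <;> norm_num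

namespace Finset

theorem sum_range_ite_succ_eq {M : Type*} [AddCommMonoid M] {N a : ℕ} {g : ℕ → M}
    (hg : g 0 = 0) :
    ∑ j ∈ range N, (if j + 1 = a then g (j + 1) else 0) = if a < N + 1 then g a else 0 := by
  have h := sum_range_succ' (fun m => if m = a then g m else 0) N
  simp only [sum_ite_eq', mem_range] at h
  rw [h]
  split_ifs <;> simp_all

end Finset

namespace Real

theorem sum_range_cos_nat_mul_int_mul_pi_div {n : ℕ} (hn : n ≠ 0) {m : ℤ}
    (hm : ¬ (2 * n : ℤ) ∣ m) :
    ∑ j ∈ range n, cos (j * (m * π / n)) = (1 - (-1) ^ m) / 2 := by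
  set θ := m * π / n with hθ
  have hnR : (n : ℝ) ≠ 0 := Nat.cast_ne_zero.mpr hn
  have hsin : sin (θ / 2) ≠ 0 := by
    rw [Ne, sin_eq_zero_iff]
    rintro ⟨k, hk⟩
    refine hm ⟨k, ?_⟩
    have : (m : ℝ) = 2 * n * k := by
      rw [hθ] at hk
      field_simp at hk
      nlinarith [pi_pos]
    exact_mod_cast this
  have hsum := sin_mul_sum_cos n θ 0
  simp only [add_zero, mul_comm θ] at hsum
  have hx : n * θ / 2 = m * π / 2 := by rw [hθ]; field_simp
  have hxy : (n - 1) * θ / 2 = m * π / 2 - θ / 2 := by rw [hθ]; field_simp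
  rw [hx, hxy, cos_sub] at hsum
  have h2 : sin (m * π / 2) * cos (m * π / 2) = 0 := by
    rw [← mul_right_inj' (two_ne_zero (α := ℝ)), mul_zero, ← mul_assoc, ← sin_two_mul,
      mul_div_cancel₀ _ two_ne_zero, sin_int_mul_pi]
  have h3 : sin (m * π / 2) ^ 2 = (1 - (-1) ^ m) / 2 := by
    rw [sin_sq_eq_half_sub, mul_div_cancel₀ _ two_ne_zero, cos_int_mul_pi]
    ring
  apply mul_left_cancel₀ hsin
  linear_combination hsum + cos (θ / 2) * h2 + sin (θ / 2) * h3

theorem sum_range_sin_mul_sin_nat_mul_pi_div {n a b : ℕ} (ha : 0 < a) (han : a < n)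
    (hb : 0 < b) (hbn : b < n) :
    ∑ j ∈ range n, sin (j * (a * π / n)) * sin (j * (b * π / n)) =
      if a = b then (n : ℝ) / 2 else 0 := by
  have hn : n ≠ 0 := by omega
  have not_dvd : ∀ m : ℤ, m ≠ 0 → |m| < 2 * n → ¬ (2 * n : ℤ) ∣ m :=
    fun m hm hlt hdvd => hm (Int.eq_zero_of_abs_lt_dvd hdvd hlt)
  have hprod : ∀ j : ℕ, sin (j * (a * π / n)) * sin (j * (b * π / n)) =
      (cos (j * (((a - b : ℤ) : ℝ) * π / n)) - cos (j * (((a + b : ℤ) : ℝ) * π / n))) / 2 := by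
    intro j
    have hsub : (j : ℝ) * (((a - b : ℤ) : ℝ) * π / n) = j * (a * π / n) - j * (b * π / n) := by
      push_cast; ring
    have hadd : (j : ℝ) * (((a + b : ℤ) : ℝ) * π / n) = j * (a * π / n) + j * (b * π / n) := by
      push_cast; ring
    rw [hsub, hadd, cos_sub, cos_add]
    ring
  simp only [hprod, ← sum_div, sum_sub_distrib]
  rw [sum_range_cos_nat_mul_int_mul_pi_div hn (m := a + b)
    (not_dvd _ (by omega) (by rw [abs_lt]; omega))]
  have hpar : (-1 : ℝ) ^ ((a : ℤ) + b) = (-1) ^ ((a : ℤ) - b) := by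
    rw [show (a : ℤ) + b = a - b + 2 * b by ring, zpow_add₀ (by norm_num),
      (even_two_mul _).neg_one_zpow, mul_one]
  split_ifs with hab
  · subst hab
    simp [hpar]
  · rw [sum_range_cos_nat_mul_int_mul_pi_div hn (m := a - b)
      (not_dvd _ (by omega) (by rw [abs_lt]; omega)), hpar]
    ring

end Real

namespace Matrix

variable {m n 𝕂 : Type*} [Fintype m] [DecidableEq m] [Fintype n] [DecidableEq n] [RCLike 𝕂]

open scoped Norms.Operator in
theorem exp_kronecker_one (A : Matrix m m 𝕂) :
    NormedSpace.exp (A ⊗ₖ (1 : Matrix n n 𝕂)) = NormedSpace.exp A ⊗ₖ 1 := by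
  rw [kronecker_one, kronecker_one, exp_blockDiagonal]
  congr 1
  ext1 i
  exact NormedSpace.map_exp (Pi.evalRingHom (fun _ : n => Matrix m m 𝕂) i) (continuous_apply i) _

open scoped Norms.Operator in
theorem exp_reindex {l : Type*} [Fintype l] [DecidableEq l] (e : m ≃ l) (A : Matrix m m 𝕂) :
    NormedSpace.exp (reindex e e A) = reindex e e (NormedSpace.exp A) :=
  (NormedSpace.map_exp (reindexAlgEquiv ℚ 𝕂 e) (continuous_id.matrix_reindex _ _) A).symm

theorem exp_one_kronecker (B : Matrix n n 𝕂) :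
    NormedSpace.exp ((1 : Matrix m m 𝕂) ⊗ₖ B) = 1 ⊗ₖ NormedSpace.exp B := by
  rw [one_kronecker, one_kronecker, exp_reindex, ← kronecker_one, exp_kronecker_one, kronecker_one]

theorem exp_kronecker_one_add_one_kronecker (A : Matrix m m 𝕂) (B : Matrix n n 𝕂) :
    NormedSpace.exp (A ⊗ₖ 1 + 1 ⊗ₖ B) = NormedSpace.exp A ⊗ₖ NormedSpace.exp B := by
  have hcomm : Commute (A ⊗ₖ (1 : Matrix n n 𝕂)) ((1 : Matrix m m 𝕂) ⊗ₖ B) := by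
    simp only [Commute, SemiconjBy, ← mul_kronecker_mul, one_mul, mul_one]
  rw [exp_add_of_commute _ _ hcomm, exp_kronecker_one, exp_one_kronecker, ← mul_kronecker_mul,
    mul_one, one_mul]

end Matrix

namespace DGFFStmt

open Matrix Real

-- `i : Fin (n - 1)` stands for the site `i + 1` of `{1, …, n - 1}`.
noncomputable def pathLaplacian (n : ℕ) : Matrix (Fin (n - 1)) (Fin (n - 1)) ℝ :=
  Matrix.of fun i j =>
    if i = j then -1 else if (i : ℕ) + 1 = j ∨ (j : ℕ) + 1 = i then 1 / 2 else 0

noncomputable def sineMatrix (n : ℕ) : Matrix (Fin (n - 1)) (Fin (n - 1)) ℝ :=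
  Matrix.of fun i k => sin (((i : ℕ) + 1 : ℕ) * (((k : ℕ) + 1 : ℕ) * π / n))

noncomputable def pathEigenvalue (n a : ℕ) : ℝ := 1 - cos (a * π / n)

lemma sum_pathLaplacian_mul {n : ℕ} {f : ℕ → ℝ} (hf0 : f 0 = 0) (hfn : f n = 0)
    (i : Fin (n - 1)) :
    ∑ j, pathLaplacian n i j * f (j + 1) = (f i + f (i + 2)) / 2 - f (i + 1) := by
  have hi := i.isLt
  have hterm : ∀ j : Fin (n - 1), pathLaplacian n i j * f (j + 1) =
      (if (j : ℕ) + 1 = i then f (j + 1) / 2 else 0) +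
      (if (j : ℕ) = i + 1 then f (j + 1) / 2 else 0) - (if (j : ℕ) = i then f (j + 1) else 0) := by
    intro j
    simp only [pathLaplacian, of_apply, Fin.ext_iff]
    split_ifs <;> first | (exfalso; omega) | ring
  simp only [hterm, sum_add_distrib, sum_sub_distrib,
    Fin.sum_univ_eq_sum_range (fun j => if j + 1 = (i : ℕ) then f (j + 1) / 2 else 0),
    Fin.sum_univ_eq_sum_range (fun j => if j = (i : ℕ) + 1 then f (j + 1) / 2 else 0),
    Fin.sum_univ_eq_sum_range (fun j => if j = (i : ℕ) then f (j + 1) else 0),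
    sum_ite_eq', mem_range, sum_range_ite_succ_eq (g := fun m => f m / 2) (by simp [hf0])]
  rcases lt_or_eq_of_le (Nat.succ_le_of_lt hi) with hlt | heq
  · rw [if_pos (by omega), if_pos hlt, if_pos hi]
    ring
  · rw [if_pos (by omega), if_neg (by omega), if_pos hi, show (i : ℕ) + 2 = n by omega, hfn]
    ring

lemma sineMatrix_mul_self (n : ℕ) : sineMatrix n * sineMatrix n = ((n : ℝ) / 2) • 1 := by
  ext k l
  have hk := k.isLt
  have hsum := sum_range_succ' (fun j : ℕ => sin (j * (((k : ℕ) + 1 : ℕ) * π / n)) *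
    sin (j * (((l : ℕ) + 1 : ℕ) * π / n))) (n - 1)
  rw [Nat.sub_add_cancel (by omega), sum_range_sin_mul_sin_nat_mul_pi_div (by omega) (by omega)
    (by omega) (by omega), ← Fin.sum_univ_eq_sum_range] at hsum
  rw [mul_apply, Matrix.smul_apply, one_apply]
  convert hsum.symm using 1
  · simp only [sineMatrix, of_apply, Nat.cast_zero, zero_mul, sin_zero, mul_zero, add_zero]
    exact sum_congr rfl fun j _ => by push_cast; ring_nf
  · simp [Fin.ext_iff]

lemma pathLaplacian_mul_sineMatrix (n : ℕ) :
    pathLaplacian n * sineMatrix n =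
      sineMatrix n * diagonal fun k : Fin (n - 1) => -pathEigenvalue n ((k : ℕ) + 1) := by
  ext i k
  have hn : (n : ℝ) ≠ 0 := Nat.cast_ne_zero.mpr (by have := i.isLt; omega)
  set θ : ℝ := ((k : ℕ) + 1 : ℕ) * π / n with hθ
  have key := sum_pathLaplacian_mul (f := fun m : ℕ => sin (m * θ)) (by simp)
    (by rw [hθ, mul_div_cancel₀ _ hn, sin_nat_mul_pi]) i
  have htrig : sin ((i : ℕ) * θ) + sin (((i : ℕ) + 2 : ℕ) * θ) =
      2 * cos θ * sin (((i : ℕ) + 1 : ℕ) * θ) := by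
    have h1 : ((i : ℕ) : ℝ) * θ = ((i : ℕ) + 1 : ℕ) * θ - θ := by push_cast; ring
    have h2 : (((i : ℕ) + 2 : ℕ) : ℝ) * θ = ((i : ℕ) + 1 : ℕ) * θ + θ := by push_cast; ring
    rw [h1, h2, sin_sub, sin_add]
    ring
  rw [mul_apply, mul_diagonal]
  simp only [sineMatrix, pathEigenvalue, of_apply] at key ⊢
  rw [key, ← hθ]
  linear_combination htrig / 2

lemma exp_smul_pathLaplacian (n : ℕ) (s : ℝ) :
    NormedSpace.exp (s • pathLaplacian n) = (2 / n : ℝ) • (sineMatrix n *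
      diagonal (fun k : Fin (n - 1) => Real.exp (-(s * pathEigenvalue n ((k : ℕ) + 1)))) *
        sineMatrix n) := by
  rcases Nat.lt_or_ge n 2 with hn | hn
  · ext i
    exact absurd i.isLt (by omega)
  have hright : sineMatrix n * ((2 / n : ℝ) • sineMatrix n) = 1 := by
    have hn' : (n : ℝ) ≠ 0 := by positivity
    rw [Matrix.mul_smul, sineMatrix_mul_self, smul_smul,
      show (2 / n : ℝ) * (n / 2) = 1 by field_simp, one_smul]
  have hdet : IsUnit (sineMatrix n).det := isUnit_det_of_right_inverse hright
  have hconj : s • pathLaplacian n = sineMatrix n *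
      diagonal (fun k : Fin (n - 1) => -(s * pathEigenvalue n ((k : ℕ) + 1))) *
        (sineMatrix n)⁻¹ := by
    rw [← mul_nonsing_inv_cancel_right (sineMatrix n) (s • pathLaplacian n) hdet,
      Matrix.smul_mul, pathLaplacian_mul_sineMatrix, ← Matrix.mul_smul, ← diagonal_smul]
    simp only [Pi.smul_def, smul_eq_mul, mul_neg]
  have hexp : NormedSpace.exp (fun k : Fin (n - 1) => -(s * pathEigenvalue n ((k : ℕ) + 1))) =
      fun k : Fin (n - 1) => Real.exp (-(s * pathEigenvalue n ((k : ℕ) + 1))) := by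
    ext k
    rw [Pi.coe_exp, Real.exp_eq_exp_ℝ]
  rw [hconj, exp_conj _ _ ((isUnit_iff_isUnit_det _).mpr hdet), exp_diagonal, hexp,
    inv_eq_right_inv hright, Matrix.mul_smul]

lemma abs_exp_smul_pathLaplacian_apply_le (n : ℕ) (s : ℝ) (i j : Fin (n - 1)) :
    |NormedSpace.exp (s • pathLaplacian n) i j| ≤
      2 / n * ∑ k : Fin (n - 1), Real.exp (-(s * pathEigenvalue n ((k : ℕ) + 1))) := by
  rw [exp_smul_pathLaplacian, Matrix.smul_apply, smul_eq_mul, abs_mul,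
    abs_of_nonneg (by positivity), mul_apply]
  gcongr
  refine (abs_sum_le_sum_abs _ _).trans (sum_le_sum fun k _ => ?_)
  rw [mul_diagonal, abs_mul, abs_mul, abs_of_pos (Real.exp_pos _)]
  calc |sineMatrix n i k| * _ * |sineMatrix n k j| ≤ 1 * _ * 1 := by
        gcongr
        all_goals first | positivity | exact abs_sin_le_one _
    _ = _ := by ring

lemma pathEigenvalue_le_pathEigenvalue {n a b : ℕ} (hab : a ≤ b) (hbn : b ≤ n) :
    pathEigenvalue n a ≤ pathEigenvalue n b := by
  have hπ := pi_pos
  have hb : (b : ℝ) * π / n ≤ π :=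
    div_le_of_le_mul₀ (by positivity) hπ.le (by rw [mul_comm π]; gcongr)
  have := cos_le_cos_of_nonneg_of_le_pi (x := a * π / n) (by positivity) hb (by gcongr)
  unfold pathEigenvalue
  linarith

lemma two_mul_sq_le_sq_mul_pathEigenvalue {n a : ℕ} (ha : a ≤ n) :
    2 * (a : ℝ) ^ 2 ≤ (n : ℝ) ^ 2 * pathEigenvalue n a := by
  rcases eq_or_ne n 0 with rfl | hn
  · simp [Nat.le_zero.mp ha]
  have hπ := pi_pos
  have hx : |(a : ℝ) * π / n| ≤ π := by
    rw [abs_of_nonneg (by positivity)]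
    exact div_le_of_le_mul₀ (by positivity) hπ.le (by rw [mul_comm π]; gcongr)
  have hcos := cos_le_one_sub_mul_cos_sq hx
  calc 2 * (a : ℝ) ^ 2 = (n : ℝ) ^ 2 * (2 / π ^ 2 * ((a : ℝ) * π / n) ^ 2) := by field_simp
    _ ≤ (n : ℝ) ^ 2 * pathEigenvalue n a := by unfold pathEigenvalue; gcongr; linarith

lemma sq_mul_pathEigenvalue_one_le (n : ℕ) : (n : ℝ) ^ 2 * pathEigenvalue n 1 ≤ π ^ 2 / 2 := by
  rcases eq_or_ne n 0 with rfl | hn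
  · simp; positivity
  have hcos := one_sub_sq_div_two_le_cos (x := π / n)
  calc (n : ℝ) ^ 2 * pathEigenvalue n 1 ≤ (n : ℝ) ^ 2 * ((π / n) ^ 2 / 2) := by
        unfold pathEigenvalue; gcongr; rw [Nat.cast_one, one_mul]; linarith
    _ = π ^ 2 / 2 := by field_simp

lemma exp_neg_mul_pathEigenvalue_le {n a : ℕ} (ha : a < n) {s : ℝ} (hs : (n : ℝ) ^ 2 / 2 ≤ s) :
    Real.exp (-(s * pathEigenvalue n (a + 1))) ≤
      Real.exp (3 / 2) * (1 / 2) ^ a * Real.exp (-(s * pathEigenvalue n 1)) := by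
  have hmono := pathEigenvalue_le_pathEigenvalue (n := n) (a := 1) (b := a + 1) (by omega) ha
  have hlow := two_mul_sq_le_sq_mul_pathEigenvalue (n := n) (a := a + 1) ha
  have hup := sq_mul_pathEigenvalue_one_le n
  have hπ : π ^ 2 < 10 := by nlinarith [pi_lt_d2, pi_pos]
  -- `s (λ_{a+1} - λ_1) ≥ (a + 1)² - π² / 4 ≥ a - 3 / 2`: the source of `exp (3 / 2)`.
  have hgap : (a : ℝ) - 3 / 2 ≤ s * (pathEigenvalue n (a + 1) - pathEigenvalue n 1) :=
    calc (a : ℝ) - 3 / 2 ≤ (n : ℝ) ^ 2 / 2 * (pathEigenvalue n (a + 1) - pathEigenvalue n 1) := by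
          push_cast at hlow
          nlinarith
      _ ≤ s * (pathEigenvalue n (a + 1) - pathEigenvalue n 1) := by gcongr
  have hhalf : Real.exp (-1) ≤ 1 / 2 := by
    rw [Real.exp_neg, inv_le_comm₀ (Real.exp_pos 1) (by norm_num)]
    linarith [Real.add_one_le_exp 1]
  calc Real.exp (-(s * pathEigenvalue n (a + 1)))
      ≤ Real.exp (3 / 2 + a * (-1) + -(s * pathEigenvalue n 1)) := by gcongr; linarith
    _ = Real.exp (3 / 2) * Real.exp (-1) ^ a * Real.exp (-(s * pathEigenvalue n 1)) := by
        rw [Real.exp_add, Real.exp_add, Real.exp_nat_mul]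
    _ ≤ Real.exp (3 / 2) * (1 / 2) ^ a * Real.exp (-(s * pathEigenvalue n 1)) := by gcongr

lemma sum_exp_neg_mul_pathEigenvalue_le {n : ℕ} {s : ℝ} (hs : (n : ℝ) ^ 2 / 2 ≤ s) :
    ∑ k : Fin (n - 1), Real.exp (-(s * pathEigenvalue n ((k : ℕ) + 1))) ≤
      2 * Real.exp (3 / 2) * Real.exp (-(s * pathEigenvalue n 1)) :=
  calc ∑ k : Fin (n - 1), Real.exp (-(s * pathEigenvalue n ((k : ℕ) + 1)))
      ≤ ∑ k : Fin (n - 1), Real.exp (3 / 2) * (1 / 2) ^ (k : ℕ) *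
          Real.exp (-(s * pathEigenvalue n 1)) :=
        sum_le_sum fun k _ => exp_neg_mul_pathEigenvalue_le (by omega) hs
    _ = (∑ k ∈ range (n - 1), (1 / 2 : ℝ) ^ k) * Real.exp (3 / 2) *
          Real.exp (-(s * pathEigenvalue n 1)) := by
        rw [Fin.sum_univ_eq_sum_range (fun k => Real.exp (3 / 2) * (1 / 2) ^ k *
          Real.exp (-(s * pathEigenvalue n 1))), sum_mul, sum_mul]
        exact sum_congr rfl fun k _ => by ring
    _ ≤ 2 * Real.exp (3 / 2) * Real.exp (-(s * pathEigenvalue n 1)) := by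
        gcongr
        exact sum_geometric_two_le _

lemma abs_exp_smul_pathLaplacian_apply_le_of_sq_le {n : ℕ} {s : ℝ} (hs : (n : ℝ) ^ 2 / 2 ≤ s)
    (i j : Fin (n - 1)) :
    |NormedSpace.exp (s • pathLaplacian n) i j| ≤
      4 * Real.exp (3 / 2) / n * Real.exp (-(s * pathEigenvalue n 1)) :=
  calc |NormedSpace.exp (s • pathLaplacian n) i j|
      ≤ 2 / n * ∑ k : Fin (n - 1), Real.exp (-(s * pathEigenvalue n ((k : ℕ) + 1))) :=
        abs_exp_smul_pathLaplacian_apply_le n s i j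
    _ ≤ 2 / n * (2 * Real.exp (3 / 2) * Real.exp (-(s * pathEigenvalue n 1))) := by
        gcongr
        exact sum_exp_neg_mul_pathEigenvalue_le hs
    _ = 4 * Real.exp (3 / 2) / n * Real.exp (-(s * pathEigenvalue n 1)) := by ring

lemma adj_coord_iff {n : ℕ} (x y : Lam n) :
    adj (coord n x) (coord n y) ↔
      (x.1 = y.1 ∧ ((x.2 : ℕ) + 1 = y.2 ∨ (y.2 : ℕ) + 1 = x.2)) ∨
        (x.2 = y.2 ∧ ((x.1 : ℕ) + 1 = y.1 ∨ (y.1 : ℕ) + 1 = x.1)) := by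
  simp only [adj, coord, Int.sq_add_sq_eq_one_iff, Fin.ext_iff]
  omega

lemma Delta_eq_kronecker (n : ℕ) :
    Delta n = (1 / 2 : ℝ) • (pathLaplacian n ⊗ₖ 1 + 1 ⊗ₖ pathLaplacian n) := by
  ext ⟨x₁, x₂⟩ ⟨y₁, y₂⟩
  simp only [Matrix.smul_apply, Matrix.add_apply, kroneckerMap_apply, one_apply]
  simp only [Delta, pathLaplacian, of_apply, adj_coord_iff, Prod.mk.injEq, Fin.ext_iff,
    smul_eq_mul]
  split_ifs <;> first | (exfalso; omega) | norm_num

lemma exp_smul_Delta (n : ℕ) (t : ℝ) :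
    NormedSpace.exp (t • Delta n) =
      NormedSpace.exp ((t / 2) • pathLaplacian n) ⊗ₖ
        NormedSpace.exp ((t / 2) • pathLaplacian n) := by
  rw [Delta_eq_kronecker, smul_smul, mul_one_div, smul_add, ← smul_kronecker, ← kronecker_smul,
    exp_kronecker_one_add_one_kronecker]

lemma lamOne_eq_pathEigenvalue (n : ℕ) : lamOne n = pathEigenvalue n 1 := by
  simp [lamOne, pathEigenvalue]

/-- Heat-kernel entry bound: for `t ≥ n²`, `(e^{tΔ_n})(x,y) ≤ (C/n²)·e^{−λ_𝟏 t}`. -/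
theorem heat_kernel_entry_bound :
    ∃ C : ℝ, 0 < C ∧ ∀ n : ℕ, 2 ≤ n → ∀ t : ℝ, (n : ℝ) ^ 2 ≤ t → ∀ x y : Lam n,
      NormedSpace.exp (t • Delta n) x y ≤ C / (n : ℝ) ^ 2 * Real.exp (-(lamOne n) * t) := by
  refine ⟨16 * Real.exp 3, by positivity, fun n _ t ht x y => ?_⟩
  have hP := abs_exp_smul_pathLaplacian_apply_le_of_sq_le (n := n) (s := t / 2) (by linarith)
  set B := 4 * Real.exp (3 / 2) / n * Real.exp (-(t / 2 * pathEigenvalue n 1)) with hB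
  have hBB : B * B = 16 * Real.exp 3 / n ^ 2 * Real.exp (-lamOne n * t) := by
    have h3 : Real.exp 3 = Real.exp (3 / 2) * Real.exp (3 / 2) := by
      rw [← Real.exp_add]; norm_num
    rw [hB, h3, lamOne_eq_pathEigenvalue, show -pathEigenvalue n 1 * t =
      -(t / 2 * pathEigenvalue n 1) + -(t / 2 * pathEigenvalue n 1) by ring, Real.exp_add]
    ring
  rw [exp_smul_Delta, kroneckerMap_apply, ← hBB]
  exact (le_abs_self _).trans <| (abs_mul _ _).trans_le <|
    mul_le_mul (hP _ _) (hP _ _) (abs_nonneg _) (by positivity)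

end DGFFStmt
end

section
/- There exists a universal constant ζ ∈ (0,1] such that for every μ > 0, ∫_ζ^∞ (e^{−(x−μ)²/2} − e^{−(x+μ)²/2}) dx ≥ ζ · ∫_0^∞ (e^{−(x−μ)²/2} − e^{−(x+μ)²/2}) dx. Equivalently, a random variable Y with law ν̄₁^μ (the probability measure on [0,∞) with density proportional to e^{−(x−μ)²/2} − e^{−(x+μ)²/2} on x ≥ 0) stochastically dominates ζ·Ber(ζ), uniformly in μ > 0. -/
/-!
With `f(x) = e^{-(x-μ)²/2} - e^{-(x+μ)²/2} = 2 e^{-(x²+μ²)/2} sinh(xμ)`, one has `f(x) ≤ f(x + 1/2)`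
for `0 ≤ x ≤ 1/2`: shifting by `1/2` costs the Gaussian factor at most `e^{3/8} < 2`, while
`sinh((x + 1/2)μ) ≥ sinh(2xμ) ≥ 2 sinh(xμ)`. Hence the mass of `f` on `[0, 1/2]` is at most its
mass on `[1/2, 1]`, and since `f ≥ 0` the mass on `(1/2, ∞)` is at least half the total: `ζ = 1/2`.
-/

open MeasureTheory Set intervalIntegral

theorem integral_Ioi_le_two_mul_integral_Ioi_add {f : ℝ → ℝ} {a h : ℝ} (hh : 0 ≤ h)
    (hf : IntegrableOn f (Ioi a)) (hshift : ∀ x ∈ Icc a (a + h), f x ≤ f (x + h))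
    (hnonneg : ∀ x ∈ Ioi (a + h), 0 ≤ f x) :
    ∫ x in Ioi a, f x ≤ 2 * ∫ x in Ioi (a + h), f x := by
  have hfh : IntegrableOn f (Ioi (a + h)) := hf.mono_set (Ioi_subset_Ioi (by linarith))
  have hint : ∀ b, a ≤ b → IntervalIntegrable f volume b (b + h) := fun b hb =>
    (intervalIntegrable_iff_integrableOn_Ioc_of_le (by linarith)).2
      (hf.mono_set fun x hx => lt_of_le_of_lt hb hx.1)
  have hshifted : IntervalIntegrable (fun x => f (x + h)) volume a (a + h) := by
    simpa using (hint (a + h) (by linarith)).comp_add_right h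
  have hfirst : ∫ x in a..a + h, f x ≤ ∫ x in a + h..a + h + h, f x :=
    calc ∫ x in a..a + h, f x ≤ ∫ x in a..a + h, f (x + h) :=
          integral_mono_on (by linarith) (hint a le_rfl) hshifted hshift
      _ = ∫ x in a + h..a + h + h, f x := integral_comp_add_right f h
  have hsecond : ∫ x in a + h..a + h + h, f x ≤ ∫ x in Ioi (a + h), f x := by
    rw [integral_of_le (by linarith)]
    exact setIntegral_mono_set hfh ((ae_restrict_iff' measurableSet_Ioi).2 (.of_forall hnonneg))
      Ioc_subset_Ioi_self.eventuallyLE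
  rw [← integral_interval_add_Ioi hf hfh]
  linarith

theorem two_mul_sinh_le_sinh {x y : ℝ} (hx : 0 ≤ x) (hxy : 2 * x ≤ y) :
    2 * Real.sinh x ≤ Real.sinh y :=
  calc 2 * Real.sinh x ≤ 2 * Real.sinh x * Real.cosh x :=
        le_mul_of_one_le_right (by positivity) (Real.one_le_cosh x)
    _ = Real.sinh (2 * x) := (Real.sinh_two_mul x).symm
    _ ≤ Real.sinh y := Real.sinh_le_sinh.2 hxy

theorem exp_sub_sq_sub_exp_add_sq (μ x : ℝ) :
    Real.exp (-(x - μ) ^ 2 / 2) - Real.exp (-(x + μ) ^ 2 / 2)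
      = 2 * Real.exp (-(x ^ 2 + μ ^ 2) / 2) * Real.sinh (x * μ) := by
  rw [Real.sinh_eq, show -(x - μ) ^ 2 / 2 = -(x ^ 2 + μ ^ 2) / 2 + x * μ by ring,
    show -(x + μ) ^ 2 / 2 = -(x ^ 2 + μ ^ 2) / 2 + -(x * μ) by ring, Real.exp_add, Real.exp_add]
  ring

theorem exp_sub_sq_sub_exp_add_sq_nonneg {μ x : ℝ} (hμ : 0 ≤ μ) (hx : 0 ≤ x) :
    0 ≤ Real.exp (-(x - μ) ^ 2 / 2) - Real.exp (-(x + μ) ^ 2 / 2) := by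
  rw [exp_sub_sq_sub_exp_add_sq]
  have := Real.sinh_nonneg_iff.2 (mul_nonneg hx hμ)
  positivity

theorem exp_sub_sq_sub_exp_add_sq_le_shift_half {μ x : ℝ} (hμ : 0 ≤ μ) (hx₀ : 0 ≤ x)
    (hx₁ : x ≤ 1 / 2) :
    Real.exp (-(x - μ) ^ 2 / 2) - Real.exp (-(x + μ) ^ 2 / 2)
      ≤ Real.exp (-(x + 1 / 2 - μ) ^ 2 / 2) - Real.exp (-(x + 1 / 2 + μ) ^ 2 / 2) := by
  rw [exp_sub_sq_sub_exp_add_sq, exp_sub_sq_sub_exp_add_sq]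
  set c := Real.exp (-((x + 1 / 2) ^ 2 + μ ^ 2) / 2)
  have hgauss : Real.exp (-(x ^ 2 + μ ^ 2) / 2) ≤ 2 * c := by
    rw [show -(x ^ 2 + μ ^ 2) / 2 = (x + 1 / 4) / 2 + -((x + 1 / 2) ^ 2 + μ ^ 2) / 2 by ring,
      Real.exp_add]
    refine mul_le_mul_of_nonneg_right ?_ (Real.exp_pos _).le
    rw [← Real.le_log_iff_exp_le two_pos]
    linarith [Real.log_two_gt_d9]
  have hsinh : 2 * Real.sinh (x * μ) ≤ Real.sinh ((x + 1 / 2) * μ) :=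
    two_mul_sinh_le_sinh (by positivity) (by nlinarith)
  have : 0 ≤ Real.sinh (x * μ) := Real.sinh_nonneg_iff.2 (mul_nonneg hx₀ hμ)
  calc 2 * Real.exp (-(x ^ 2 + μ ^ 2) / 2) * Real.sinh (x * μ)
      ≤ 2 * (2 * c) * Real.sinh (x * μ) := by gcongr
    _ = 2 * c * (2 * Real.sinh (x * μ)) := by ring
    _ ≤ 2 * c * Real.sinh ((x + 1 / 2) * μ) := by gcongr

theorem integrable_exp_neg_sq_sub_div_two (c : ℝ) :
    Integrable fun x : ℝ => Real.exp (-(x - c) ^ 2 / 2) := by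
  convert (integrable_exp_neg_mul_sq (by norm_num : (0 : ℝ) < 1 / 2)).comp_sub_right c using 2
  ring_nf

/-- Stochastic domination of the sticky-coupling discrepancy: there is a universal `ζ ∈ (0,1]`
such that for every `μ > 0`, a random variable with the normalized density
`∝ e^{−(x−μ)²/2} − e^{−(x+μ)²/2}` on `x ≥ 0` stochastically dominates `ζ·Ber(ζ)`; equivalently,
its mass on `(ζ,∞)` is at least `ζ` times its total mass. -/
theorem sticky_discrepancy_dominates_bernoulli :
    ∃ ζ : ℝ, 0 < ζ ∧ ζ ≤ 1 ∧ ∀ μ : ℝ, 0 < μ →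
      ζ * ∫ x in Set.Ioi (0 : ℝ),
            (Real.exp (-(x - μ) ^ 2 / 2) - Real.exp (-(x + μ) ^ 2 / 2))
        ≤ ∫ x in Set.Ioi ζ,
            (Real.exp (-(x - μ) ^ 2 / 2) - Real.exp (-(x + μ) ^ 2 / 2)) := by
  refine ⟨1 / 2, by norm_num, by norm_num, fun μ hμ => ?_⟩
  have hf : Integrable fun x => Real.exp (-(x - μ) ^ 2 / 2) - Real.exp (-(x + μ) ^ 2 / 2) :=
    (integrable_exp_neg_sq_sub_div_two μ).sub
      (by simpa using integrable_exp_neg_sq_sub_div_two (-μ))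
  have key := integral_Ioi_le_two_mul_integral_Ioi_add (a := 0) (h := 1 / 2) (by norm_num)
    hf.integrableOn
    (fun x hx => exp_sub_sq_sub_exp_add_sq_le_shift_half hμ.le hx.1 (by linarith [hx.2]))
    (fun x hx => (exp_sub_sq_sub_exp_add_sq_nonneg hμ.le (by linarith [mem_Ioi.1 hx])))
  rw [zero_add] at key
  linarith
end

section
/- There exist constants η > 0 and δ > 0 such that for every μ > 0 and every x ∈ [μ + η, μ + 2η], one has e^{−(x−μ)²/2} − e^{−(x+μ)²/2} ≥ δ · ∫_{−μ}^{μ} e^{−u²/2} du; i.e., the density of the normalized measure ν̄₁^μ is bounded below by a universal constant on the interval [μ+η, μ+2η], uniformly over all μ > 0. -/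
open MeasureTheory

lemma sticky_int_le_two_mu (μ : ℝ) (hμ : 0 < μ) :
    ∫ u in (-μ)..μ, Real.exp (-u ^ 2 / 2) ≤ 2 * μ := by
  have hcont : Continuous fun u : ℝ => Real.exp (-u ^ 2 / 2) := by continuity
  have h1 : ∫ u in (-μ)..μ, Real.exp (-u ^ 2 / 2) ≤ ∫ _u in (-μ)..μ, (1:ℝ) := by
    apply intervalIntegral.integral_mono_on (by linarith)
      (hcont.intervalIntegrable _ _) (intervalIntegrable_const)
    intro u _
    calc Real.exp (-u ^ 2 / 2) ≤ Real.exp 0 := by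
          apply Real.exp_le_exp.mpr; nlinarith [sq_nonneg u]
      _ = 1 := Real.exp_zero
  simpa using h1.trans_eq (by simp; ring)

lemma sticky_int_le_three (μ : ℝ) (hμ : 0 < μ) :
    ∫ u in (-μ)..μ, Real.exp (-u ^ 2 / 2) ≤ 3 := by
  have hfe : (fun u : ℝ => Real.exp (-u ^ 2 / 2)) =
      fun u : ℝ => Real.exp (-(1/2) * u ^ 2) := by
    funext u; ring_nf
  have hint : Integrable (fun u : ℝ => Real.exp (-u ^ 2 / 2)) := by
    rw [hfe]; exact integrable_exp_neg_mul_sq (by norm_num)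
  have h1 : ∫ u in (-μ)..μ, Real.exp (-u ^ 2 / 2)
      = ∫ u in Set.Ioc (-μ) μ, Real.exp (-u ^ 2 / 2) :=
    intervalIntegral.integral_of_le (by linarith)
  have h2 : ∫ u in Set.Ioc (-μ) μ, Real.exp (-u ^ 2 / 2)
      ≤ ∫ u : ℝ, Real.exp (-u ^ 2 / 2) :=
    setIntegral_le_integral hint
      (Filter.Eventually.of_forall fun u => (Real.exp_pos _).le)
  have h3 : ∫ u : ℝ, Real.exp (-u ^ 2 / 2) = Real.sqrt (Real.pi / (1/2)) := by
    rw [hfe]; exact integral_gaussian (1/2)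
  have h4 : Real.sqrt (Real.pi / (1/2)) ≤ 3 := by
    have h9 : Real.pi / (1/2) ≤ 9 := by
      have := Real.pi_le_four; linarith
    calc Real.sqrt (Real.pi / (1/2)) ≤ Real.sqrt 9 := Real.sqrt_le_sqrt h9
      _ = 3 := by
          rw [show (9:ℝ) = 3 ^ 2 by norm_num, Real.sqrt_sq (by norm_num)]
  linarith [h1 ▸ h2, h3 ▸ h4.trans_eq rfl]

/-- Uniform density lower bound for the normalized sticky-coupling measure `ν̄₁^μ`:
there are universal `η, δ > 0` such that for every `μ > 0` and every
`x ∈ [μ+η, μ+2η]`, the unnormalized density `e^{−(x−μ)²/2} − e^{−(x+μ)²/2}` is at least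
`δ` times the total mass `∫_{−μ}^{μ} e^{−u²/2} du`. -/
theorem sticky_density_lower_bound :
    ∃ η : ℝ, 0 < η ∧ ∃ δ : ℝ, 0 < δ ∧ ∀ μ : ℝ, 0 < μ →
      ∀ x : ℝ, μ + η ≤ x → x ≤ μ + 2 * η →
        δ * ∫ u in (-μ)..μ, Real.exp (-u ^ 2 / 2)
          ≤ Real.exp (-(x - μ) ^ 2 / 2) - Real.exp (-(x + μ) ^ 2 / 2) := by
  refine ⟨1/2, by norm_num, 1/10, by norm_num, fun μ hμ x hx1 hx2 => ?_⟩
  -- factorization: exp(-(x+μ)²/2) = exp(-(x-μ)²/2) * exp(-(2μx))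
  have hfac : Real.exp (-(x + μ) ^ 2 / 2)
      = Real.exp (-(x - μ) ^ 2 / 2) * Real.exp (-(2 * μ * x)) := by
    rw [← Real.exp_add]; ring_nf
  -- exp(-(x-μ)²/2) ≥ 1/2
  have hhalf : (1/2 : ℝ) ≤ Real.exp (-(x - μ) ^ 2 / 2) := by
    have e1 : Real.exp (1/2) * Real.exp (1/2) = Real.exp 1 := by
      rw [← Real.exp_add]; norm_num
    have h2 : Real.exp (1/2) ≤ 2 := by
      nlinarith [Real.exp_one_lt_d9, Real.exp_pos (1/2)]
    have h3 : (1/2 : ℝ) ≤ Real.exp (-(1/2)) := by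
      rw [Real.exp_neg]
      calc (1/2 : ℝ) = 1 / 2 := by norm_num
        _ ≤ 1 / Real.exp (1/2) := one_div_le_one_div_of_le (Real.exp_pos _) h2
        _ = (Real.exp (1/2))⁻¹ := one_div _
    refine h3.trans (Real.exp_le_exp.mpr ?_)
    nlinarith [sq_nonneg (x - μ)]
  have hE1 : (0:ℝ) < Real.exp (-(x - μ) ^ 2 / 2) := Real.exp_pos _
  rcases le_or_gt μ 1 with hμ1 | hμ1
  · -- small μ
    have hint := sticky_int_le_two_mu μ hμ
    have hexp : Real.exp (-(2 * μ * x)) ≤ Real.exp (-μ) := by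
      apply Real.exp_le_exp.mpr; nlinarith
    have hlow : 1 - Real.exp (-μ) ≥ μ / 2 := by
      have h := Real.add_one_le_exp μ
      have hp : Real.exp (-μ) * Real.exp μ = 1 := by
        rw [← Real.exp_add]; simp
      have hep := Real.exp_pos μ
      have hepn := Real.exp_pos (-μ)
      nlinarith
    rw [hfac]
    nlinarith [Real.exp_pos (-(2 * μ * x))]
  · -- large μ
    have hint := sticky_int_le_three μ hμ
    have hexp : Real.exp (-(2 * μ * x)) ≤ Real.exp (-3) := by
      apply Real.exp_le_exp.mpr; nlinarith
    have hlow : Real.exp (-3 : ℝ) ≤ 1/4 := by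
      have h := Real.add_one_le_exp (3:ℝ)
      have hp : Real.exp (-3 : ℝ) * Real.exp 3 = 1 := by
        rw [← Real.exp_add]; simp
      nlinarith [Real.exp_pos (3:ℝ)]
    rw [hfac]
    nlinarith [Real.exp_pos (-(2 * μ * x))]
end
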